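/- arXiv:1904.09359 — 4 statements merged into one kernel-verified Lean document; each statement's English description precedes it below -/
import Mathlib

section
/- Let p be an odd prime, m ≥ 1, and f : GF(p)^{2m} → GF(p) an even bent function with f(0)=0. Set N = W_f(0) = ±p^m. Then |f^{-1}(i)| = (N-1)·N/p for each 1 ≤ i ≤ p-1, and |f^{-1}(0) \ {0}| = (N-1)(N/p + 1). -/
/-!
Grouping the Walsh sum at `0` by the values of `f` gives `∑ᵢ |f⁻¹(i)| ζ^i = N`. For `p` prime the
only integer relation among `1, ζ, …, ζ^(p-1)` is that their sum vanishes (the minimal polynomial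
of `ζ` has degree `p - 1`), so `|f⁻¹(i)| = t` for all `i ≠ 0` and `|f⁻¹(0)| = t + N`. Counting all
`p^(2m) = N²` points gives `p t + N = N²`, i.e. `t = (N - 1) N / p`.
-/

open Finset BigOperators

noncomputable def zeta (p : ℕ) : ℂ := Complex.exp (2 * Real.pi * Complex.I / p)

def ip {p n : ℕ} (x y : Fin n → ZMod p) : ZMod p := ∑ i, x i * y i

noncomputable def walsh {p n : ℕ} [NeZero p]
    (f : (Fin n → ZMod p) → ZMod p) (x : Fin n → ZMod p) : ℂ :=
  ∑ y, zeta p ^ (f y - ip x y).val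

theorem ZMod.sum_val_eq_sum_range {M : Type*} [AddCommMonoid M] (p : ℕ) [NeZero p]
    (g : ℕ → M) : ∑ i : ZMod p, g i.val = ∑ k ∈ range p, g k := by
  cases p with
  | zero => exact absurd rfl (NeZero.ne 0)
  | succ n => exact Fin.sum_univ_eq_sum_range g (n + 1)

namespace IsPrimitiveRoot

variable {K : Type*} [Field K] [CharZero K] {p : ℕ} {ζ : K}

theorem linearIndependent_int_pow_of_prime (hζ : IsPrimitiveRoot ζ p) (hp : p.Prime) :
    LinearIndependent ℤ fun k : Fin (p - 1) => ζ ^ (k : ℕ) := by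
  have hdeg : (minpoly ℚ ζ).natDegree = p - 1 := by
    rw [← Polynomial.cyclotomic_eq_minpoly_rat hζ hp.pos, Polynomial.natDegree_cyclotomic,
      Nat.totient_prime hp]
  have hli := linearIndependent_pow (K := ℚ) ζ
  rw [hdeg] at hli
  exact hli.restrict_scalars' ℤ

theorem eq_of_sum_intCast_mul_pow_eq_zero (hζ : IsPrimitiveRoot ζ p) (hp : p.Prime)
    {c : ℕ → ℤ} (h : ∑ k ∈ range p, (c k : K) * ζ ^ k = 0) {k : ℕ} (hk : k < p) :
    c k = c (p - 1) := by
  have hrel : ∑ k ∈ range (p - 1), ((c k - c (p - 1) : ℤ) : K) * ζ ^ k = 0 := by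
    have hfull : ∑ k ∈ range p, ((c k - c (p - 1) : ℤ) : K) * ζ ^ k = 0 := by
      simp only [Int.cast_sub, sub_mul, sum_sub_distrib, ← mul_sum, h,
        hζ.geom_sum_eq_zero hp.one_lt, mul_zero, sub_zero]
    rwa [show range p = range (p - 1 + 1) by rw [Nat.sub_add_cancel hp.one_le], sum_range_succ,
      sub_self, Int.cast_zero, zero_mul, add_zero] at hfull
  rcases lt_or_eq_of_le (Nat.le_sub_one_of_lt hk) with hk' | rfl
  · have hrel' : ∑ i : Fin (p - 1), (c i - c (p - 1)) • ζ ^ (i : ℕ) = 0 := by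
      simpa only [zsmul_eq_mul, Fin.sum_univ_eq_sum_range
        (fun k => ((c k - c (p - 1) : ℤ) : K) * ζ ^ k)] using hrel
    exact sub_eq_zero.mp <| Fintype.linearIndependent_iff.mp
      (hζ.linearIndependent_int_pow_of_prime hp) _ hrel' ⟨k, hk'⟩
  · rfl

theorem eq_of_sum_intCast_mul_pow_val_eq_zero [Fact p.Prime] (hζ : IsPrimitiveRoot ζ p)
    {c : ZMod p → ℤ} (h : ∑ i : ZMod p, (c i : K) * ζ ^ i.val = 0) (i j : ZMod p) : c i = c j := by
  have hp : p.Prime := Fact.out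
  have hrange : ∑ k ∈ range p, (c k : K) * ζ ^ k = 0 := by
    rw [← ZMod.sum_val_eq_sum_range p (fun k => (c k : K) * ζ ^ k)]
    simpa only [ZMod.natCast_zmod_val] using h
  have hconst (i : ZMod p) : c i = c (p - 1 : ℕ) := by
    simpa only [ZMod.natCast_zmod_val] using
      hζ.eq_of_sum_intCast_mul_pow_eq_zero hp hrange (ZMod.val_lt i)
  rw [hconst i, hconst j]

end IsPrimitiveRoot

theorem walsh_zero_eq_sum_card_fiber {p n : ℕ} [NeZero p] (f : (Fin n → ZMod p) → ZMod p) :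
    walsh f 0 = ∑ i : ZMod p, (#{x | f x = i} : ℂ) * zeta p ^ i.val := by
  have hip (y : Fin n → ZMod p) : ip 0 y = 0 := by simp [ip]
  simp only [walsh, hip, sub_zero]
  rw [← sum_fiberwise univ f]
  refine sum_congr rfl fun i _ => ?_
  rw [sum_congr rfl fun y hy => by rw [(mem_filter.mp hy).2], sum_const, nsmul_eq_mul]

theorem exists_card_fiber_eq_of_walsh_zero_eq_intCast {p n : ℕ} [Fact p.Prime]
    (f : (Fin n → ZMod p) → ZMod p) {N : ℤ} (hW : walsh f 0 = N) :
    ∃ t : ℤ, ∀ i, (#{x | f x = i} : ℤ) = t + if i = 0 then N else 0 := by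
  set c : ZMod p → ℤ := fun i => #{x | f x = i} - if i = 0 then N else 0
  have hc : ∑ i : ZMod p, (c i : ℂ) * zeta p ^ i.val = 0 := by
    simp only [c, Int.cast_sub, Int.cast_natCast, sub_mul, sum_sub_distrib,
      ← walsh_zero_eq_sum_card_fiber, hW, apply_ite (Int.cast : ℤ → ℂ), ite_mul, zero_mul,
      sum_ite_eq', mem_univ, if_true, ZMod.val_zero, pow_zero, mul_one, Int.cast_zero, sub_self]
  have hζ := Complex.isPrimitiveRoot_exp p (Fact.out : p.Prime).ne_zero
  refine ⟨c 0, fun i => ?_⟩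
  rw [← hζ.eq_of_sum_intCast_mul_pow_val_eq_zero hc i 0]
  ring

theorem mul_card_fiber_of_walsh_zero_eq_intCast {p n : ℕ} [Fact p.Prime]
    (f : (Fin n → ZMod p) → ZMod p) {N : ℤ} (hW : walsh f 0 = N) (i : ZMod p) :
    (p : ℤ) * #{x | f x = i} = p ^ n - N + if i = 0 then p * N else 0 := by
  obtain ⟨t, ht⟩ := exists_card_fiber_eq_of_walsh_zero_eq_intCast f hW
  have htotal : (p : ℤ) ^ n = p * t + N := by
    have hcard := card_eq_sum_card_fiberwise (s := univ) (t := univ) (f := f)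
      fun x _ => mem_univ (f x)
    rw [card_univ, Fintype.card_fun, ZMod.card, Fintype.card_fin] at hcard
    rw [← Nat.cast_pow, hcard, Nat.cast_sum]
    simp only [ht, sum_add_distrib, sum_const, card_univ, ZMod.card, nsmul_eq_mul, sum_ite_eq',
      mem_univ, if_true]
  rw [ht, htotal]
  split_ifs <;> ring

theorem stmt3_general (p m : ℕ) [Fact p.Prime] (hm : 1 ≤ m)
    (f : (Fin (2 * m) → ZMod p) → ZMod p)
    (h0 : f 0 = 0)
    (N : ℤ) (hN : N = (p : ℤ) ^ m ∨ N = -((p : ℤ) ^ m))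
    (hW : walsh f 0 = (N : ℂ)) :
    (∀ i : ZMod p, i ≠ 0 →
      ((Finset.univ.filter (fun x => f x = i)).card : ℤ) = (N - 1) * (N / p)) ∧
    ((Finset.univ.filter (fun x => f x = 0 ∧ x ≠ 0)).card : ℤ) = (N - 1) * (N / p + 1) := by
  have hp : (p : ℤ) ≠ 0 := by exact_mod_cast (Fact.out : p.Prime).ne_zero
  have hsq : (p : ℤ) ^ (2 * m) = N ^ 2 := by
    rcases hN with rfl | rfl <;> ring
  obtain ⟨u, rfl⟩ : (p : ℤ) ∣ N := by
    rcases hN with rfl | rfl <;> simp [dvd_pow_self _ (by omega : m ≠ 0)]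
  have hcount := mul_card_fiber_of_walsh_zero_eq_intCast f hW
  rw [hsq] at hcount
  rw [Int.mul_ediv_cancel_left _ hp]
  constructor
  · intro i hi
    refine mul_left_cancel₀ hp ?_
    rw [hcount i, if_neg hi]
    ring
  · have hzero : #{x | f x = 0 ∧ x ≠ 0} = #{x | f x = 0} - 1 := by
      rw [filter_and, filter_ne', inter_erase, inter_univ, card_erase_of_mem (by simp [h0])]
    have hpos : 0 < #{x | f x = 0} := card_pos.mpr ⟨0, by simp [h0]⟩
    rw [hzero, Nat.cast_sub hpos, Nat.cast_one]
    refine mul_left_cancel₀ hp ?_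
    rw [mul_sub, hcount 0, if_pos rfl]
    ring

/-- Let `p` be an odd prime, `m ≥ 1`, and `f : GF(p)^{2m} → GF(p)` an even
bent function with `f 0 = 0`.  Set `N = W_f(0) = ± p^m`.  Then `|f⁻¹(i)| = (N-1)·(N/p)` for
each `1 ≤ i ≤ p - 1`, and `|f⁻¹(0) \ {0}| = (N-1)·(N/p + 1)`. -/
theorem stmt3 (p m : ℕ) [Fact p.Prime] (hodd : p ≠ 2) (hm : 1 ≤ m)
    (f : (Fin (2 * m) → ZMod p) → ZMod p)
    (heven : ∀ x, f (-x) = f x) (h0 : f 0 = 0)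
    (hbent : ∀ x, ‖walsh f x‖ = (p : ℝ) ^ m)
    (N : ℤ) (hN : N = (p : ℤ) ^ m ∨ N = -((p : ℤ) ^ m))
    (hW : walsh f 0 = (N : ℂ)) :
    (∀ i : ZMod p, i ≠ 0 →
      ((Finset.univ.filter (fun x => f x = i)).card : ℤ) = (N - 1) * (N / p)) ∧
    ((Finset.univ.filter (fun x => f x = 0 ∧ x ≠ 0)).card : ℤ) = (N - 1) * (N / p + 1) :=
  stmt3_general p m hm f h0 N hN hW
end

section
/- Main theorem: Let p be an odd prime, m ≥ 1, and f : GF(p)^{2m} → GF(p) even with f(0)=0. If the p component Cayley graphs of f are all strongly regular and either all of Latin square type with parameters (N², (N-1)r_i, N+r_i²-3r_i, r_i²-r_i) for N = p^m, or all of negative Latin square type with the same parameter form for N = -p^m, where r_i = N/p for 1 ≤ i ≤ p-1 and r_p = N/p + 1, then f is bent; moreover W_f(0) = N and for each x ≠ 0, W_f(x) = ζ^j N for some 0 ≤ j ≤ p-1. -/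
/-!
For `x ≠ 0` put `Sᵢ(x) = ∑_{a ∈ Dᵢ} ζ^{-⟨x, a⟩}`. Expanding `Sᵢ(x)²` and counting common
neighbours in the strongly regular Cayley graph `Γᵢ` gives `Sᵢ² = (k - μ) + (λ - μ) Sᵢ`, which
for the Latin square parameters factors as `(Sᵢ - (N - rᵢ)) (Sᵢ + rᵢ) = 0`. Since the `Dᵢ`
partition the nonzero vectors, `∑ᵢ Sᵢ(x) = -1`; together with `∑ᵢ rᵢ = N + 1` this forces
`Sⱼ(x) = N - rⱼ` for exactly one `j`. Finally `W_f(x) = 1 + ∑ᵢ ζ^i Sᵢ(x)` and `∑ᵢ ζ^i rᵢ = 1`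
give `W_f(x) = ζ^j N`, while `Sᵢ(0) = |Dᵢ| = (N - 1) rᵢ` gives `W_f(0) = N`.
-/

open Finset BigOperators

/-- The component Cayley graph `Γ_i` of `f` on `GF(p)^n`: distinct vertices `x, y` are
adjacent iff `x - y` lies in the connection set `D_i = {z ≠ 0 | f z = i}` (for an even `f`
the symmetrization in `fromRel` is harmless).  For `i ≠ 0` this set is `f⁻¹(i)`, and for
`i = 0` it is `f⁻¹(0) \ {0}`; i.e. `i = 0` plays the role of the index `p`. -/
def cayleyGraph {p n : ℕ} (f : (Fin n → ZMod p) → ZMod p) (i : ZMod p) :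
    SimpleGraph (Fin n → ZMod p) :=
  SimpleGraph.fromRel (fun x y => f (x - y) = i)

lemma AddChar.sum_mul_sum_eq_sum_card_filter_mul {G R : Type*} [AddCommGroup G] [Fintype G]
    [DecidableEq G] [CommRing R] (ψ : AddChar G R) (S T : Finset G) :
    (∑ a ∈ S, ψ a) * ∑ b ∈ T, ψ b = ∑ z, (#{a ∈ S | z - a ∈ T} : R) * ψ z := by
  have translate : ∀ a, ∑ b ∈ T, ψ a * ψ b = ∑ z, if z - a ∈ T then ψ z else 0 := fun a => by
    rw [← Fintype.sum_equiv (Equiv.addLeft a) (fun b => if b ∈ T then ψ (a + b) else 0)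
      _ (fun b => by simp), ← sum_filter, filter_mem_eq_inter, univ_inter]
    simp only [AddChar.map_add_eq_mul]
  simp_rw [sum_mul_sum, translate]
  rw [sum_comm]
  simp [← sum_filter]

namespace SimpleGraph

variable {G : Type*} [AddCommGroup G] {Γ : SimpleGraph G} {S : Finset G}

lemma neg_mem_of_adj_iff_sub_mem (hΓ : ∀ x y, Γ.Adj x y ↔ x - y ∈ S) {a : G} :
    -a ∈ S ↔ a ∈ S := by
  rw [← zero_sub, ← hΓ, Γ.adj_comm, hΓ, sub_zero]

variable [Fintype G] [DecidableRel Γ.Adj] {n k ℓ μ : ℕ}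

lemma IsSRGWith.card_of_adj_iff_sub_mem (h : Γ.IsSRGWith n k ℓ μ)
    (hΓ : ∀ x y, Γ.Adj x y ↔ x - y ∈ S) : #S = k := by
  rw [← h.regular 0, ← card_neighborFinset_eq_degree]
  congr 1
  ext a
  rw [mem_neighborFinset, hΓ, zero_sub, neg_mem_of_adj_iff_sub_mem hΓ]

variable [DecidableEq G]

lemma card_commonNeighbors_of_adj_iff_sub_mem (hΓ : ∀ x y, Γ.Adj x y ↔ x - y ∈ S) (z : G) :
    Fintype.card (Γ.commonNeighbors z 0) = #{a ∈ S | z - a ∈ S} := by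
  rw [← Set.toFinset_card]
  congr 1
  ext a
  simp only [Set.mem_toFinset, mem_commonNeighbors, mem_filter, hΓ, zero_sub,
    neg_mem_of_adj_iff_sub_mem hΓ]
  tauto

lemma IsSRGWith.card_filter_sub_mem (h : Γ.IsSRGWith n k ℓ μ)
    (hΓ : ∀ x y, Γ.Adj x y ↔ x - y ∈ S) (z : G) :
    #{a ∈ S | z - a ∈ S} = if z = 0 then k else if z ∈ S then ℓ else μ := by
  rw [← card_commonNeighbors_of_adj_iff_sub_mem hΓ]
  split_ifs with hz hzS
  · subst hz
    rw [← h.card_of_adj_iff_sub_mem hΓ, card_commonNeighbors_of_adj_iff_sub_mem hΓ]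
    congr 1
    exact filter_true_of_mem fun a ha => by rwa [zero_sub, neg_mem_of_adj_iff_sub_mem hΓ]
  · exact h.of_adj z 0 (by rwa [hΓ, sub_zero])
  · exact h.of_not_adj hz (by rwa [hΓ, sub_zero])

lemma IsSRGWith.sum_addChar_sq {R : Type*} [CommRing R] [IsDomain R] (h : Γ.IsSRGWith n k ℓ μ)
    (hΓ : ∀ x y, Γ.Adj x y ↔ x - y ∈ S) {ψ : AddChar G R} (hψ : ψ ≠ 1) :
    (∑ a ∈ S, ψ a) ^ 2 = (k - μ : R) + (ℓ - μ : R) * ∑ a ∈ S, ψ a := by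
  have h0S : (0 : G) ∉ S := by rw [← sub_self 0, ← hΓ]; exact Γ.irrefl
  have expand : ∀ z, ((if z = 0 then k else if z ∈ S then ℓ else μ : ℕ) : R) * ψ z =
      μ * ψ z + (k - μ) * (if z = 0 then 1 else 0) + (ℓ - μ) * (if z ∈ S then ψ z else 0) := by
    intro z
    split_ifs <;> simp_all
    ring
  rw [sq, ψ.sum_mul_sum_eq_sum_card_filter_mul]
  simp only [h.card_filter_sub_mem hΓ, expand, sum_add_distrib, ← mul_sum, sum_ite_eq',
    mem_univ, if_true, sum_ite_mem, univ_inter, AddChar.sum_eq_zero_of_ne_one hψ]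
  ring

lemma IsSRGWith.sum_addChar_eq_or {K : Type*} [Field K] (h : Γ.IsSRGWith n k ℓ μ)
    (hΓ : ∀ x y, Γ.Adj x y ↔ x - y ∈ S) {ψ : AddChar G K} (hψ : ψ ≠ 1) {N r : K}
    (hk : (k : K) = (N - 1) * r) (hℓ : (ℓ : K) = N + r ^ 2 - 3 * r) (hμ : (μ : K) = r ^ 2 - r) :
    ∑ a ∈ S, ψ a = N - r ∨ ∑ a ∈ S, ψ a = -r := by
  have hsq := h.sum_addChar_sq hΓ hψ
  rw [hk, hℓ, hμ] at hsq
  have : (∑ a ∈ S, ψ a - (N - r)) * (∑ a ∈ S, ψ a + r) = 0 := by linear_combination hsq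
  rcases mul_eq_zero.mp this with h | h
  · exact .inl (by linear_combination h)
  · exact .inr (by linear_combination h)

end SimpleGraph

section ConnectionSet

variable {G ι : Type*} [AddCommGroup G] [Fintype G] [DecidableEq G] [DecidableEq ι]

def connectionSet (f : G → ι) (i : ι) : Finset G := {z | z ≠ 0 ∧ f z = i}

@[simp]
lemma mem_connectionSet {f : G → ι} {i : ι} {z : G} :
    z ∈ connectionSet f i ↔ z ≠ 0 ∧ f z = i := by
  simp [connectionSet]

lemma sum_eq_add_sum_sum_connectionSet [Fintype ι] {M : Type*} [AddCommMonoid M]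
    (f : G → ι) (g : G → M) : ∑ y, g y = g 0 + ∑ i, ∑ a ∈ connectionSet f i, g a := by
  rw [← add_sum_erase _ _ (mem_univ 0), ← sum_fiberwise _ f]
  congr 2 with i
  congr 1
  ext a
  simp

lemma AddChar.sum_sum_connectionSet [Fintype ι] {R : Type*} [CommRing R] [IsDomain R]
    {ψ : AddChar G R} (hψ : ψ ≠ 1) (f : G → ι) :
    ∑ i, ∑ a ∈ connectionSet f i, ψ a = -1 := by
  have := sum_eq_add_sum_sum_connectionSet f ψ
  rw [AddChar.sum_eq_zero_of_ne_one hψ, AddChar.map_zero_eq_one] at this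
  linear_combination -this

end ConnectionSet

lemma exists_eq_ite_sub_of_forall_eq_or {ι K : Type*} [Fintype ι] [DecidableEq ι] [Field K]
    [CharZero K] {N : K} (hN : N ≠ 0) {r s : ι → K} (hs : ∀ i, s i = N - r i ∨ s i = -r i)
    (hsum : ∑ i, s i = -1) (hr : ∑ i, r i = N + 1) :
    ∃ j, ∀ i, s i = (if i = j then N else 0) - r i := by
  classical
  set T : Finset ι := {i | s i = N - r i}
  have hsT : ∀ i, s i = (if i ∈ T then N else 0) - r i := fun i => by
    rcases hs i with h | h <;> by_cases hi : i ∈ T <;> simp_all [T]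
  have hT : #T = 1 := by
    simp only [hsT, sum_sub_distrib, sum_ite_mem, univ_inter, sum_const, nsmul_eq_mul, hr] at hsum
    exact_mod_cast mul_right_cancel₀ hN (by linear_combination hsum : (#T : K) * N = 1 * N)
  obtain ⟨j, hj⟩ := card_eq_one.mp hT
  exact ⟨j, fun i => by simp only [hsT, hj, mem_singleton]⟩

lemma AddChar.sum_mul_add_ite_zero {A K : Type*} [AddGroup A] [Fintype A] [DecidableEq A]
    [Field K] {ψ : AddChar A K} (hψ : ψ ≠ 1) (M : K) :
    ∑ a, ψ a * (M + if a = 0 then 1 else 0) = 1 := by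
  simp [mul_add, sum_add_distrib, ← sum_mul, AddChar.sum_eq_zero_of_ne_one hψ]

namespace AddChar

variable {F R : Type*} [CommRing F] [CommMonoid R] {n : ℕ}

def dotShift (ψ : AddChar F R) (x : Fin n → F) : AddChar (Fin n → F) R :=
  ψ.compAddMonoidHom (AddMonoidHom.mk' (x ⬝ᵥ ·) fun _ _ => dotProduct_add _ _ _)

@[simp]
lemma dotShift_apply (ψ : AddChar F R) (x z : Fin n → F) : ψ.dotShift x z = ψ (x ⬝ᵥ z) := rfl

lemma dotShift_ne_one {F : Type*} [Field F] {ψ : AddChar F R} (hψ : ψ ≠ 1) {x : Fin n → F}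
    (hx : x ≠ 0) : ψ.dotShift x ≠ 1 := by
  obtain ⟨a, ha⟩ := ne_one_iff.mp hψ
  obtain ⟨i, hi⟩ := Function.ne_iff.mp hx
  refine ne_one_iff.mpr ⟨Pi.single i (a / x i), ?_⟩
  rwa [dotShift_apply, dotProduct_single, mul_div_cancel₀ _ hi]

end AddChar

lemma zeta_isPrimitiveRoot (p : ℕ) [NeZero p] : IsPrimitiveRoot (zeta p) p := by
  simpa [zeta] using Complex.isPrimitiveRoot_exp p (NeZero.ne p)

noncomputable def zetaChar (p : ℕ) [NeZero p] : AddChar (ZMod p) ℂ :=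
  AddChar.zmodChar p (zeta_isPrimitiveRoot p).pow_eq_one

lemma zetaChar_apply {p : ℕ} [NeZero p] (a : ZMod p) : zetaChar p a = zeta p ^ a.val := rfl

lemma zetaChar_ne_one (p : ℕ) [Fact p.Prime] : zetaChar p ≠ 1 := by
  rw [AddChar.zmod_char_ne_one_iff, zetaChar_apply, ZMod.val_one, pow_one]
  exact (zeta_isPrimitiveRoot p).ne_one (Fact.out : p.Prime).one_lt

lemma norm_zetaChar {p : ℕ} [NeZero p] (a : ZMod p) : ‖zetaChar p a‖ = 1 := by
  rw [zetaChar_apply, norm_pow,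
    Complex.norm_eq_one_of_pow_eq_one (zeta_isPrimitiveRoot p).pow_eq_one (NeZero.ne p), one_pow]

lemma cayleyGraph_adj {p n : ℕ} [NeZero p] {f : (Fin n → ZMod p) → ZMod p}
    (heven : ∀ x, f (-x) = f x) {i : ZMod p} {x y : Fin n → ZMod p} :
    (cayleyGraph f i).Adj x y ↔ x - y ∈ connectionSet f i := by
  rw [cayleyGraph, SimpleGraph.fromRel_adj, mem_connectionSet, ← neg_sub x y, heven, or_self,
    sub_ne_zero]

lemma walsh_eq_one_add_sum_connectionSet {p n : ℕ} [NeZero p] {f : (Fin n → ZMod p) → ZMod p}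
    (h0 : f 0 = 0) (x : Fin n → ZMod p) :
    walsh f x = 1 + ∑ i, zetaChar p i * ∑ a ∈ connectionSet f i, (zetaChar p).dotShift (-x) a := by
  have term : ∀ y, zeta p ^ (f y - ip x y).val = zetaChar p (f y) * (zetaChar p).dotShift (-x) y :=
    fun y => by
      rw [AddChar.dotShift_apply, neg_dotProduct, ← AddChar.map_add_eq_mul, ← sub_eq_add_neg]; rfl
  simp_rw [walsh, term, sum_eq_add_sum_sum_connectionSet f, h0, AddChar.map_zero_eq_one, one_mul,
    mul_sum]
  congr 1
  refine sum_congr rfl fun i _ => sum_congr rfl fun a ha => ?_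
  rw [(mem_connectionSet.mp ha).2]

lemma sum_latinSquareParams {p : ℕ} [Fact p.Prime] {N : ℤ} (hpN : (p : ℤ) ∣ N) {R : ZMod p → ℤ}
    (hR : ∀ i, R i = if i = 0 then N / p + 1 else N / p) :
    ∑ i, (R i : ℂ) = N + 1 ∧ ∑ i, zetaChar p i * R i = 1 := by
  have hRC : ∀ i, (R i : ℂ) = (N / p : ℤ) + if i = 0 then 1 else 0 := fun i => by
    rw [hR]; split_ifs <;> push_cast <;> ring
  have hNp : (p : ℂ) * (N / p : ℤ) = N := by exact_mod_cast Int.mul_ediv_cancel' hpN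
  simp only [hRC]
  exact ⟨by simp [sum_add_distrib, hNp], AddChar.sum_mul_add_ite_zero (zetaChar_ne_one p) _⟩

section LatinSquareType

variable {p n : ℕ} [Fact p.Prime] {f : (Fin n → ZMod p) → ZMod p}
  [∀ i, DecidableRel (cayleyGraph f i).Adj] {N : ℂ} {r : ZMod p → ℂ} {v : ℕ} {k ℓ μ : ZMod p → ℕ}

lemma walsh_zero_eq_of_isSRGWith (heven : ∀ x, f (-x) = f x) (h0 : f 0 = 0)
    (hsrg : ∀ i, (cayleyGraph f i).IsSRGWith v (k i) (ℓ i) (μ i))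
    (hk : ∀ i, (k i : ℂ) = (N - 1) * r i) (hψr : ∑ i, zetaChar p i * r i = 1) :
    walsh f 0 = N := by
  simp only [walsh_eq_one_add_sum_connectionSet h0, neg_zero, AddChar.dotShift_apply,
    zero_dotProduct, AddChar.map_zero_eq_one, sum_const, nsmul_one,
    fun i => (hsrg i).card_of_adj_iff_sub_mem fun _ _ => cayleyGraph_adj heven, hk]
  simp only [mul_left_comm _ (N - 1), ← mul_sum, hψr]
  ring

lemma exists_walsh_eq_zetaChar_mul_of_isSRGWith (heven : ∀ x, f (-x) = f x) (h0 : f 0 = 0)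
    (hsrg : ∀ i, (cayleyGraph f i).IsSRGWith v (k i) (ℓ i) (μ i))
    (hk : ∀ i, (k i : ℂ) = (N - 1) * r i) (hℓ : ∀ i, (ℓ i : ℂ) = N + r i ^ 2 - 3 * r i)
    (hμ : ∀ i, (μ i : ℂ) = r i ^ 2 - r i) (hN : N ≠ 0) (hr : ∑ i, r i = N + 1)
    (hψr : ∑ i, zetaChar p i * r i = 1) {x : Fin n → ZMod p} (hx : x ≠ 0) :
    ∃ j, walsh f x = zetaChar p j * N := by
  have hχ := AddChar.dotShift_ne_one (zetaChar_ne_one p) (neg_ne_zero.mpr hx)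
  obtain ⟨j, hj⟩ := exists_eq_ite_sub_of_forall_eq_or hN
    (fun i => (hsrg i).sum_addChar_eq_or (fun _ _ => cayleyGraph_adj heven) hχ (hk i) (hℓ i) (hμ i))
    (AddChar.sum_sum_connectionSet hχ f) hr
  refine ⟨j, ?_⟩
  simp only [walsh_eq_one_add_sum_connectionSet h0, hj, mul_sub, sum_sub_distrib, hψr, mul_ite,
    mul_zero, sum_ite_eq', mem_univ, if_true]
  ring

end LatinSquareType

open scoped Classical in
theorem stmt12_general (p m : ℕ) [Fact p.Prime] (hm : 1 ≤ m)
    (f : (Fin (2 * m) → ZMod p) → ZMod p)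
    (heven : ∀ x, f (-x) = f x) (h0 : f 0 = 0)
    (N : ℤ) (hN : N = (p : ℤ) ^ m ∨ N = -((p : ℤ) ^ m))
    (R : ZMod p → ℤ)
    (hR : ∀ i : ZMod p, R i = if i = 0 then N / p + 1 else N / p)
    (hSRG : ∀ i : ZMod p, ∃ k l mu : ℕ,
      (k : ℤ) = (N - 1) * R i ∧ (l : ℤ) = N + R i ^ 2 - 3 * R i ∧
      (mu : ℤ) = R i ^ 2 - R i ∧
      (cayleyGraph f i).IsSRGWith (p ^ (2 * m)) k l mu) :
    (∀ x, ‖walsh f x‖ = (p : ℝ) ^ m) ∧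
    walsh f 0 = (N : ℂ) ∧
    (∀ x, x ≠ 0 → ∃ j : ℕ, j ≤ p - 1 ∧ walsh f x = zeta p ^ j * (N : ℂ)) := by
  choose k ℓ μ hk hℓ hμ hsrg using hSRG
  have hNnorm : ‖(N : ℂ)‖ = p ^ m := by rcases hN with rfl | rfl <;> simp
  have hN0 : (N : ℂ) ≠ 0 := by
    rw [← norm_ne_zero_iff, hNnorm]; exact pow_ne_zero _ (mod_cast (Fact.out : p.Prime).ne_zero)
  have hpN : (p : ℤ) ∣ N := by rcases hN with rfl | rfl <;> simp [Nat.one_le_iff_ne_zero.mp hm]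
  obtain ⟨hsumR, hψR⟩ := sum_latinSquareParams hpN hR
  have hkC : ∀ i, (k i : ℂ) = (N - 1) * R i := fun i => mod_cast hk i
  have hℓC : ∀ i, (ℓ i : ℂ) = N + R i ^ 2 - 3 * R i := fun i => mod_cast hℓ i
  have hμC : ∀ i, (μ i : ℂ) = R i ^ 2 - R i := fun i => mod_cast hμ i
  have hW0 := walsh_zero_eq_of_isSRGWith heven h0 hsrg hkC hψR
  have hW {x : Fin (2 * m) → ZMod p} (hx : x ≠ 0) :=
    exists_walsh_eq_zetaChar_mul_of_isSRGWith heven h0 hsrg hkC hℓC hμC hN0 hsumR hψR hx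
  refine ⟨fun x => ?_, hW0, fun x hx => ?_⟩
  · rcases eq_or_ne x 0 with rfl | hx
    · rw [hW0, hNnorm]
    · obtain ⟨j, hj⟩ := hW hx
      rw [hj, norm_mul, norm_zetaChar, one_mul, hNnorm]
  · obtain ⟨j, hj⟩ := hW hx
    exact ⟨j.val, Nat.le_sub_one_of_lt (ZMod.val_lt j), hj⟩

open scoped Classical in
/-- **Main theorem.** Let `p` be an odd prime, `m ≥ 1`, and
`f : GF(p)^{2m} → GF(p)` even with `f 0 = 0`.  If the `p` component Cayley graphs of `f`
are all strongly regular with parameters `(N², (N-1)r_i, N + r_i² - 3r_i, r_i² - r_i)`,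
either all of Latin square type (`N = p^m`) or all of negative Latin square type
(`N = -p^m`), where `r_i = N/p` for `1 ≤ i ≤ p-1` and `r_p = N/p + 1`, then `f` is bent;
moreover `W_f(0) = N` and for each `x ≠ 0`, `W_f(x) = ζ^j N` for some `0 ≤ j ≤ p-1`. -/
theorem stmt12 (p m : ℕ) [Fact p.Prime] (hodd : p ≠ 2) (hm : 1 ≤ m)
    (f : (Fin (2 * m) → ZMod p) → ZMod p)
    (heven : ∀ x, f (-x) = f x) (h0 : f 0 = 0)
    (N : ℤ) (hN : N = (p : ℤ) ^ m ∨ N = -((p : ℤ) ^ m))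
    (R : ZMod p → ℤ)
    (hR : ∀ i : ZMod p, R i = if i = 0 then N / p + 1 else N / p)
    (hSRG : ∀ i : ZMod p, ∃ k l mu : ℕ,
      (k : ℤ) = (N - 1) * R i ∧ (l : ℤ) = N + R i ^ 2 - 3 * R i ∧
      (mu : ℤ) = R i ^ 2 - R i ∧
      (cayleyGraph f i).IsSRGWith (p ^ (2 * m)) k l mu) :
    (∀ x, ‖walsh f x‖ = (p : ℝ) ^ m) ∧
    walsh f 0 = (N : ℂ) ∧
    (∀ x, x ≠ 0 → ∃ j : ℕ, j ≤ p - 1 ∧ walsh f x = zeta p ^ j * (N : ℂ)) :=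
  stmt12_general p m hm f heven h0 N hN R hR hSRG
end

section
/- Duality theorem: Let f : GF(p)^{2m} → GF(p) be of feasible Latin (resp. negative Latin) square type with dual f*. Then the component Cayley graphs Γ*_i of f* are strongly regular with exactly the same parameters (N², (N-1)r_i, N+r_i²-3r_i, r_i²-r_i) as Γ_i, for each 1 ≤ i ≤ p. -/
open Finset BigOperators

set_option linter.unusedSectionVars false

namespace Stmt16

noncomputable def chi (p : ℕ) (a : ZMod p) : ℂ := zeta p ^ a.val

variable {p : ℕ} [hp : Fact p.Prime]

lemma zeta_prim : IsPrimitiveRoot (zeta p) p :=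
  Complex.isPrimitiveRoot_exp p hp.out.ne_zero

lemma zeta_pow_mod (k : ℕ) : zeta p ^ (k % p) = zeta p ^ k :=
  (pow_eq_pow_mod k zeta_prim.pow_eq_one).symm

lemma chi_add (a b : ZMod p) : chi p (a + b) = chi p a * chi p b := by
  rw [chi, chi, chi, ← pow_add, ZMod.val_add, zeta_pow_mod]

lemma chi_zero : chi p (0 : ZMod p) = 1 := by
  simp [chi]

lemma chi_inj : Function.Injective (chi p) := by
  intro a b h
  have := zeta_prim (p := p).pow_inj (ZMod.val_lt a) (ZMod.val_lt b) h
  exact ZMod.val_injective p this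

lemma chi_one_ne_one : chi p (1 : ZMod p) ≠ 1 := by
  intro h
  have : (1 : ZMod p) = 0 := chi_inj (h.trans chi_zero.symm)
  exact one_ne_zero this

lemma sum_chi : ∑ a : ZMod p, chi p a = 0 := by
  have h : ∑ a : ZMod p, chi p a = ∑ a : ZMod p, chi p (a + 1) :=
    (Fintype.sum_equiv (Equiv.addRight (1 : ZMod p)) (fun a => chi p (a + 1)) (chi p)
      (fun a => rfl)).symm
  rw [Finset.sum_congr rfl (fun a _ => chi_add a 1), ← Finset.sum_mul] at h
  have h2 : (∑ a : ZMod p, chi p a) * (chi p 1 - 1) = 0 := by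
    linear_combination -h
  rcases mul_eq_zero.1 h2 with h3 | h3
  · exact h3
  · exact absurd (sub_eq_zero.1 h3) chi_one_ne_one


variable {n : ℕ}

lemma ip_comm (x y : Fin n → ZMod p) : ip x y = ip y x := by
  simp [ip, mul_comm]

lemma ip_add_right (x y z : Fin n → ZMod p) : ip x (y + z) = ip x y + ip x z := by
  simp [ip, mul_add, Finset.sum_add_distrib]

lemma ip_neg_right (x y : Fin n → ZMod p) : ip x (-y) = -ip x y := by
  simp [ip, Finset.sum_neg_distrib]

lemma ip_zero_right (x : Fin n → ZMod p) : ip x 0 = 0 := by simp [ip]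

lemma ip_zero_left (x : Fin n → ZMod p) : ip 0 x = 0 := by simp [ip]

lemma ip_neg_left (x y : Fin n → ZMod p) : ip (-x) y = -ip x y := by
  rw [ip_comm, ip_neg_right, ip_comm]

lemma ip_add_left (x y z : Fin n → ZMod p) : ip (x + y) z = ip x z + ip y z := by
  rw [ip_comm, ip_add_right, ip_comm z x, ip_comm z y]

lemma ip_sub_right (x y z : Fin n → ZMod p) : ip x (y - z) = ip x y - ip x z := by
  rw [sub_eq_add_neg, ip_add_right, ip_neg_right, sub_eq_add_neg]

lemma sum_chi_ip_zero (x : Fin n → ZMod p) (hx : x ≠ 0) :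
    ∑ y : Fin n → ZMod p, chi p (ip x y) = 0 := by
  obtain ⟨i0, hi0⟩ : ∃ i, x i ≠ 0 := Function.ne_iff.1 hx
  set z0 : Fin n → ZMod p := Function.update (0 : Fin n → ZMod p) i0 (x i0)⁻¹ with hz0
  have hip : ip x z0 = 1 := by
    rw [ip, Finset.sum_eq_single i0]
    · simp [hz0, mul_inv_cancel₀ hi0]
    · intro b _ hb
      simp [hz0, Function.update_of_ne hb]
    · simp
  have h : ∑ y : Fin n → ZMod p, chi p (ip x y)
      = ∑ y : Fin n → ZMod p, chi p (ip x (y + z0)) :=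
    (Fintype.sum_equiv (Equiv.addRight z0) (fun y => chi p (ip x (y + z0)))
      (fun y => chi p (ip x y)) (fun y => rfl)).symm
  have h2 : ∀ y : Fin n → ZMod p, chi p (ip x (y + z0)) = chi p (ip x y) * chi p 1 := by
    intro y
    rw [ip_add_right, chi_add, hip]
  rw [Finset.sum_congr rfl (fun y _ => h2 y), ← Finset.sum_mul] at h
  have h3 : (∑ y : Fin n → ZMod p, chi p (ip x y)) * (chi p 1 - 1) = 0 := by
    linear_combination -h
  rcases mul_eq_zero.1 h3 with h4 | h4
  · exact h4
  · exact absurd (sub_eq_zero.1 h4) chi_one_ne_one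

lemma card_vec : Fintype.card (Fin n → ZMod p) = p ^ n := by
  simp [ZMod.card]

lemma sum_chi_ip (x : Fin n → ZMod p) :
    ∑ y : Fin n → ZMod p, chi p (ip x y) = if x = 0 then ((p : ℂ) ^ n) else 0 := by
  by_cases hx : x = 0
  · subst hx
    simp only [ip_zero_left, chi_zero, Finset.sum_const, Finset.card_univ, card_vec,
      nsmul_eq_mul, mul_one, if_pos rfl]
    push_cast
    ring
  · rw [if_neg hx]
    exact sum_chi_ip_zero x hx

lemma fourier_inv (h : (Fin n → ZMod p) → ℂ)
    (H : ∀ x, ∑ w, h w * chi p (ip x w) = 0) : ∀ w, h w = 0 := by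
  intro w0
  have key : ∑ x : Fin n → ZMod p, (∑ w, h w * chi p (ip x w)) * chi p (ip x (-w0)) = 0 := by
    simp only [H, zero_mul, Finset.sum_const_zero]
  have lhs : ∑ x : Fin n → ZMod p, (∑ w, h w * chi p (ip x w)) * chi p (ip x (-w0))
      = ∑ w : Fin n → ZMod p, h w * ∑ x : Fin n → ZMod p, chi p (ip x (w - w0)) := by
    simp only [Finset.sum_mul]
    rw [Finset.sum_comm]
    refine Finset.sum_congr rfl (fun w _ => ?_)
    rw [Finset.mul_sum]
    refine Finset.sum_congr rfl (fun x _ => ?_)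
    rw [mul_assoc, ← chi_add, ← ip_add_right, ← sub_eq_add_neg]
  have key2 : ∀ w : Fin n → ZMod p, h w * ∑ x : Fin n → ZMod p, chi p (ip x (w - w0))
      = if w = w0 then h w * (p : ℂ) ^ n else 0 := by
    intro w
    have : (∑ x : Fin n → ZMod p, chi p (ip x (w - w0)))
        = if w - w0 = 0 then ((p : ℂ) ^ n) else 0 := by
      rw [show (∑ x : Fin n → ZMod p, chi p (ip x (w - w0)))
          = ∑ x : Fin n → ZMod p, chi p (ip (w - w0) x) from
        Finset.sum_congr rfl (fun x _ => by rw [ip_comm]), sum_chi_ip]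
    rw [this]
    by_cases hw : w = w0
    · simp [hw]
    · simp [hw, sub_ne_zero.2 hw]
  rw [lhs, Finset.sum_congr rfl (fun w _ => key2 w), Finset.sum_ite_eq' Finset.univ w0] at key
  simp only [Finset.mem_univ, if_pos] at key
  have hpn : ((p : ℂ) ^ n) ≠ 0 := pow_ne_zero _ (Nat.cast_ne_zero.2 hp.out.ne_zero)
  exact (mul_eq_zero.1 key).resolve_right hpn


end Stmt16

namespace Stmt16

noncomputable def indc {p n : ℕ} (g : (Fin n → ZMod p) → ZMod p) (a : ZMod p)
    (w : Fin n → ZMod p) : ℂ := if g w = a ∧ w ≠ 0 then 1 else 0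

noncomputable def lam {p n : ℕ} [NeZero p] (g : (Fin n → ZMod p) → ZMod p) (a : ZMod p)
    (x : Fin n → ZMod p) : ℂ := ∑ w, indc g a w * chi p (ip x w)

variable {p : ℕ} [hp : Fact p.Prime] {n : ℕ} {g : (Fin n → ZMod p) → ZMod p}

lemma indc_neg (hg : ∀ w, g (-w) = g w) (a : ZMod p) (w : Fin n → ZMod p) :
    indc g a (-w) = indc g a w := by
  simp [indc, hg, neg_eq_zero]

lemma lam_even (hg : ∀ w, g (-w) = g w) (a : ZMod p) (x : Fin n → ZMod p) :
    lam g a (-x) = lam g a x := by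
  haveI : NeZero p := ⟨hp.out.ne_zero⟩
  unfold lam
  refine (Fintype.sum_equiv (Equiv.neg _) _ _ (fun w => ?_)).symm
  simp only [Equiv.neg_apply]
  rw [indc_neg hg, ip_neg_right, ← ip_neg_left, neg_neg]

lemma adj_iff (hg : ∀ w, g (-w) = g w) (a : ZMod p) (u v : Fin n → ZMod p) :
    (cayleyGraph g a).Adj u v ↔ g (u - v) = a ∧ u - v ≠ 0 := by
  have h1 : g (v - u) = g (u - v) := by rw [show v - u = -(u - v) by abel, hg]
  constructor
  · rintro ⟨hne, h | h⟩
    · exact ⟨h, sub_ne_zero.2 hne⟩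
    · exact ⟨h1 ▸ h, sub_ne_zero.2 hne⟩
  · rintro ⟨h, hne⟩
    exact ⟨fun he => hne (by rw [he, sub_self]), Or.inl h⟩

lemma ite_adj (hg : ∀ w, g (-w) = g w) (a : ZMod p) (u v : Fin n → ZMod p)
    [Decidable ((cayleyGraph g a).Adj u v)] :
    (if (cayleyGraph g a).Adj u v then (1 : ℂ) else 0) = indc g a (u - v) := by
  by_cases h : (cayleyGraph g a).Adj u v
  · rw [if_pos h, indc, if_pos]
    exact (adj_iff hg a u v).1 h
  · rw [if_neg h, indc, if_neg]
    exact fun hc => h ((adj_iff hg a u v).2 hc)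

open scoped Classical in
lemma card_common (hg : ∀ w, g (-w) = g w) (a : ZMod p) (u v : Fin n → ZMod p) :
    (Fintype.card ((cayleyGraph g a).commonNeighbors u v) : ℂ)
      = ∑ z, indc g a (u - z) * indc g a (v - z) := by
  rw [show Fintype.card ((cayleyGraph g a).commonNeighbors u v)
      = (Finset.univ.filter
          (fun z => (cayleyGraph g a).Adj u z ∧ (cayleyGraph g a).Adj v z)).card by
    rw [← Set.toFinset_card]
    congr 1
    ext z
    simp [SimpleGraph.mem_commonNeighbors]]
  rw [Finset.card_filter]
  push_cast
  refine Finset.sum_congr rfl (fun z _ => ?_)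
  by_cases h1 : (cayleyGraph g a).Adj u z <;> by_cases h2 : (cayleyGraph g a).Adj v z <;>
    simp [h1, h2, ← ite_adj hg a u z, ← ite_adj hg a v z]

open scoped Classical in
lemma degree_eq (hg : ∀ w, g (-w) = g w) (a : ZMod p) (u : Fin n → ZMod p) :
    (((cayleyGraph g a).degree u : ℕ) : ℂ) = ∑ z, indc g a z := by
  rw [SimpleGraph.degree, show ((cayleyGraph g a).neighborFinset u)
      = Finset.univ.filter (fun z => (cayleyGraph g a).Adj u z) by
    ext z; simp [SimpleGraph.mem_neighborFinset]]
  rw [Finset.card_filter]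
  push_cast
  rw [show (∑ z, if (cayleyGraph g a).Adj u z then (1:ℂ) else 0)
      = ∑ z, indc g a (u - z) from
    Finset.sum_congr rfl (fun z _ => ite_adj hg a u z)]
  exact Fintype.sum_equiv (Equiv.subLeft u) _ _ (fun z => by simp)


noncomputable def cnv {p n : ℕ} [NeZero p] (g : (Fin n → ZMod p) → ZMod p) (a : ZMod p)
    (w : Fin n → ZMod p) : ℂ := ∑ z, indc g a z * indc g a (w + z)

lemma conv_card (a : ZMod p) (u v : Fin n → ZMod p) :
    ∑ z, indc g a (u - z) * indc g a (v - z) = cnv g a (v - u) := by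
  unfold cnv
  refine Fintype.sum_equiv (Equiv.subLeft u) _ _ (fun z => ?_)
  show indc g a (u - z) * indc g a (v - z) = indc g a (u - z) * indc g a (v - u + (u - z))
  rw [show v - u + (u - z) = v - z by abel]

lemma card_lift {α : Type*} (i1 i2 : Fintype α) :
    @Fintype.card α i1 = @Fintype.card α i2 := by
  congr 1
  exact Subsingleton.elim _ _

lemma card_common_cnv (hg : ∀ w, g (-w) = g w) (a : ZMod p) (u v : Fin n → ZMod p)
    [Fintype ((cayleyGraph g a).commonNeighbors u v)] :
    (Fintype.card ((cayleyGraph g a).commonNeighbors u v) : ℂ) = cnv g a (v - u) := by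
  classical
  have h1 := (card_common hg a u v).trans (conv_card a u v)
  rw [← h1]
  norm_cast
  exact card_lift _ _

lemma chi_aux (x w z : Fin n → ZMod p) :
    chi p (ip (-x) z) * chi p (ip x (w + z)) = chi p (ip x w) := by
  rw [← chi_add]
  congr 1
  rw [ip_neg_left, ip_add_right]
  ring

lemma fourier_cnv (a : ZMod p) (x : Fin n → ZMod p) :
    ∑ w, cnv g a w * chi p (ip x w) = lam g a (-x) * lam g a x := by
  haveI : NeZero p := ⟨hp.out.ne_zero⟩
  unfold cnv lam
  rw [Finset.sum_mul]
  simp only [Finset.sum_mul]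
  rw [Finset.sum_comm]
  refine Finset.sum_congr rfl (fun z _ => ?_)
  rw [Finset.mul_sum]
  refine Fintype.sum_equiv (Equiv.addRight z) _ _ (fun w => ?_)
  show indc g a z * indc g a (w + z) * chi p (ip x w)
      = indc g a z * chi p (ip (-x) z) * (indc g a (w + z) * chi p (ip x (w + z)))
  rw [← chi_aux x w z]
  ring

lemma cnv_zero (a : ZMod p) : cnv g a 0 = ∑ z, indc g a z := by
  unfold cnv
  refine Finset.sum_congr rfl (fun z _ => ?_)
  rw [zero_add]
  by_cases h : g z = a ∧ z ≠ 0 <;> simp [indc, h]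


open scoped Classical in
lemma srg_cnv_formula (hg : ∀ w, g (-w) = g w) (a : ZMod p) {q k l mu : ℕ}
    (h : (cayleyGraph g a).IsSRGWith q k l mu) (w : Fin n → ZMod p) :
    cnv g a w = (if w = 0 then (k : ℂ) - mu else 0) + ((l : ℂ) - mu) * indc g a w + mu := by
  by_cases hw : w = 0
  · subst hw
    have h1 := degree_eq hg a (0 : Fin n → ZMod p)
    have h2 := h.regular 0
    have h3 : ((cayleyGraph g a).degree 0 : ℂ) = k := by
      exact_mod_cast h2
    rw [cnv_zero, ← h1, h3, if_pos rfl]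
    have : indc g a (0 : Fin n → ZMod p) = 0 := by simp [indc]
    rw [this]
    ring
  · have hcc := card_common_cnv hg a (0 : Fin n → ZMod p) w
    rw [sub_zero] at hcc
    by_cases hga : g w = a
    · have hadj : (cayleyGraph g a).Adj 0 w := by
        refine (adj_iff hg a 0 w).2 ?_
        rw [zero_sub, hg]
        exact ⟨hga, by simpa [neg_eq_zero] using hw⟩
      have hl := h.of_adj 0 w hadj
      have h4 : cnv g a w = (l : ℂ) := by
        rw [← hcc]; exact_mod_cast hl
      rw [h4, if_neg hw, indc, if_pos ⟨hga, hw⟩]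
      ring
    · have hnadj : ¬ (cayleyGraph g a).Adj 0 w := by
        intro hadj
        obtain ⟨h5, -⟩ := (adj_iff hg a 0 w).1 hadj
        rw [zero_sub, hg] at h5
        exact hga h5
      have hne : (0 : Fin n → ZMod p) ≠ w := fun e => hw e.symm
      have hmu := h.of_not_adj hne hnadj
      have h4 : cnv g a w = (mu : ℂ) := by
        rw [← hcc]; exact_mod_cast hmu
      rw [h4, if_neg hw, indc, if_neg (fun hc => hga hc.1)]
      ring

open scoped Classical in
lemma lam_sq (hg : ∀ w, g (-w) = g w) (a : ZMod p) {q k l mu : ℕ}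
    (h : (cayleyGraph g a).IsSRGWith q k l mu) (x : Fin n → ZMod p) :
    lam g a x * lam g a x
      = ((k : ℂ) - mu) + ((l : ℂ) - mu) * lam g a x
        + mu * (if x = 0 then ((p : ℂ) ^ n) else 0) := by
  haveI : NeZero p := ⟨hp.out.ne_zero⟩
  nth_rewrite 1 [← lam_even hg a x]
  rw [← fourier_cnv a x,
    Finset.sum_congr rfl (fun w _ => by rw [srg_cnv_formula hg a h w])]
  simp only [add_mul, Finset.sum_add_distrib, ite_mul, zero_mul]
  rw [Finset.sum_ite_eq' Finset.univ (0 : Fin n → ZMod p)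
    (fun w => ((k : ℂ) - mu) * chi p (ip x w))]
  simp only [Finset.mem_univ, if_pos, ip_zero_right, chi_zero, mul_one]
  have e2 : (∑ w, ((l : ℂ) - mu) * indc g a w * chi p (ip x w))
      = ((l : ℂ) - mu) * lam g a x := by
    unfold lam
    rw [Finset.mul_sum]
    exact Finset.sum_congr rfl (fun w _ => by ring)
  have e3 : (∑ w : Fin n → ZMod p, (mu : ℂ) * chi p (ip x w))
      = (mu : ℂ) * (if x = 0 then ((p : ℂ) ^ n) else 0) := by
    rw [← sum_chi_ip x, Finset.mul_sum]
  rw [e2, e3]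


open scoped Classical in
lemma srg_of_cnv (hg : ∀ w, g (-w) = g w) (a : ZMod p) (k l mu : ℕ)
    (hcnv : ∀ w, cnv g a w
      = (if w = 0 then (k : ℂ) - mu else 0) + ((l : ℂ) - mu) * indc g a w + mu) :
    (cayleyGraph g a).IsSRGWith (p ^ n) k l mu := by
  constructor
  · exact card_vec
  · intro v
    have h1 := degree_eq hg a v
    have h2 : ((cayleyGraph g a).degree v : ℂ) = (k : ℂ) := by
      rw [h1, ← cnv_zero a, hcnv 0, if_pos rfl,
        show indc g a (0 : Fin n → ZMod p) = 0 by simp [indc]]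
      ring
    exact_mod_cast h2
  · intro v w hadj
    obtain ⟨hgv, hne⟩ := (adj_iff hg a v w).1 hadj
    have hind : indc g a (w - v) = 1 := by
      rw [indc, if_pos]
      constructor
      · rw [show w - v = -(v - w) by abel, hg]; exact hgv
      · rw [show w - v = -(v - w) by abel]; exact neg_ne_zero.2 hne
    have hcc := card_common_cnv hg a v w
    have h2 : (Fintype.card ((cayleyGraph g a).commonNeighbors v w) : ℂ) = (l : ℂ) := by
      rw [hcc, hcnv (w - v), hind,
        if_neg (by rw [show w - v = -(v - w) by abel]; exact neg_ne_zero.2 hne)]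
      ring
    exact_mod_cast h2
  · intro v w hvw hnadj
    have hne : v - w ≠ 0 := sub_ne_zero.2 hvw
    have hga : g (w - v) ≠ a := by
      intro hc
      exact hnadj ((adj_iff hg a v w).2
        ⟨by rw [show v - w = -(w - v) by abel, hg]; exact hc, hne⟩)
    have hind : indc g a (w - v) = 0 := by
      rw [indc, if_neg (fun hc => hga hc.1)]
    have hcc := card_common_cnv hg a v w
    have h2 : (Fintype.card ((cayleyGraph g a).commonNeighbors v w) : ℂ) = (mu : ℂ) := by
      rw [hcc, hcnv (w - v), hind,
        if_neg (by rw [show w - v = -(v - w) by abel]; exact neg_ne_zero.2 hne)]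
      ring
    exact_mod_cast h2


open scoped Classical in
lemma sum_formula (a : ZMod p) (x : Fin n → ZMod p) (A B C : ℂ) :
    ∑ w, ((if w = 0 then A else 0) + B * indc g a w + C) * chi p (ip x w)
      = A + B * lam g a x + C * (if x = 0 then ((p : ℂ) ^ n) else 0) := by
  haveI : NeZero p := ⟨hp.out.ne_zero⟩
  simp only [add_mul, Finset.sum_add_distrib, ite_mul, zero_mul]
  rw [Finset.sum_ite_eq' Finset.univ (0 : Fin n → ZMod p)
    (fun w => A * chi p (ip x w))]
  simp only [Finset.mem_univ, if_pos, ip_zero_right, chi_zero, mul_one]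
  have e2 : (∑ w, B * indc g a w * chi p (ip x w)) = B * lam g a x := by
    unfold lam
    rw [Finset.mul_sum]
    exact Finset.sum_congr rfl (fun w _ => by ring)
  have e3 : (∑ w : Fin n → ZMod p, C * chi p (ip x w))
      = C * (if x = 0 then ((p : ℂ) ^ n) else 0) := by
    rw [← sum_chi_ip x, Finset.mul_sum]
  rw [e2, e3]

lemma double_sum (hg : ∀ w, g (-w) = g w) (a : ZMod p) (x : Fin n → ZMod p) :
    ∑ w, lam g a w * chi p (ip x w) = ((p : ℂ) ^ n) * indc g a x := by
  haveI : NeZero p := ⟨hp.out.ne_zero⟩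
  unfold lam
  simp only [Finset.sum_mul]
  rw [Finset.sum_comm]
  have hptw : ∀ y, ∑ w : Fin n → ZMod p, indc g a y * chi p (ip w y) * chi p (ip x w)
      = indc g a y * (if y + x = 0 then ((p : ℂ) ^ n) else 0) := by
    intro y
    have hw : ∀ w, indc g a y * chi p (ip w y) * chi p (ip x w)
        = indc g a y * chi p (ip (y + x) w) := by
      intro w
      rw [mul_assoc, ← chi_add]
      congr 2
      rw [ip_add_left, ip_comm y w]
    rw [Finset.sum_congr rfl (fun w _ => hw w), ← Finset.mul_sum, sum_chi_ip (y + x)]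
  rw [Finset.sum_congr rfl (fun y _ => hptw y)]
  have hptw2 : ∀ y : Fin n → ZMod p, indc g a y * (if y + x = 0 then ((p : ℂ) ^ n) else 0)
      = if y = -x then indc g a y * ((p : ℂ) ^ n) else 0 := by
    intro y
    by_cases hy : y = -x
    · rw [if_pos hy, if_pos (by rw [hy]; abel)]
    · rw [if_neg hy, if_neg (fun hc => hy (eq_neg_of_add_eq_zero_left hc)), mul_zero]
  rw [Finset.sum_congr rfl (fun y _ => hptw2 y), Finset.sum_ite_eq' Finset.univ (-x)]
  simp only [Finset.mem_univ, if_pos]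
  rw [indc_neg hg]
  ring

end Stmt16

open Stmt16

open scoped Classical in
/-- **Duality theorem.** Let `f : GF(p)^{2m} → GF(p)` be of feasible Latin
(resp. negative Latin) square type with dual `f*`.  Then the component Cayley graphs
`Γ*_i` of `f*` are strongly regular with exactly the same parameters
`(N², (N-1)r_i, N + r_i² - 3r_i, r_i² - r_i)` as `Γ_i`, for each `1 ≤ i ≤ p`. -/
theorem stmt16 (p m : ℕ) [Fact p.Prime] (hodd : p ≠ 2) (hm : 1 ≤ m)
    (f : (Fin (2 * m) → ZMod p) → ZMod p)
    (heven : ∀ x, f (-x) = f x) (h0 : f 0 = 0)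
    (N : ℤ) (hN : N = (p : ℤ) ^ m ∨ N = -((p : ℤ) ^ m))
    (R : ZMod p → ℤ)
    (hR : ∀ i : ZMod p, R i = if i = 0 then N / p + 1 else N / p)
    (hSRG : ∀ i : ZMod p, ∃ k l mu : ℕ,
      (k : ℤ) = (N - 1) * R i ∧ (l : ℤ) = N + R i ^ 2 - 3 * R i ∧
      (mu : ℤ) = R i ^ 2 - R i ∧
      (cayleyGraph f i).IsSRGWith (p ^ (2 * m)) k l mu)
    (fstar : (Fin (2 * m) → ZMod p) → ZMod p) (hstar0 : fstar 0 = 0)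
    (hdual : ∀ x, walsh f x = zeta p ^ (fstar x).val * (N : ℂ)) :
    ∀ i : ZMod p, ∃ k l mu : ℕ,
      (k : ℤ) = (N - 1) * R i ∧ (l : ℤ) = N + R i ^ 2 - 3 * R i ∧
      (mu : ℤ) = R i ^ 2 - R i ∧
      (cayleyGraph fstar i).IsSRGWith (p ^ (2 * m)) k l mu := by
  haveI : NeZero p := ⟨(Fact.out : p.Prime).ne_zero⟩
  choose K L MU hK hL hMU hGall using hSRG
  have hn : (2 * m) = 2 * m := rfl
  -- numeric facts
  have hNsqZ : N ^ 2 = (p : ℤ) ^ (2 * m) := by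
    rcases hN with h | h <;> rw [h] <;> ring
  have hNsq : (N : ℂ) ^ 2 = (p : ℂ) ^ (2 * m) := by exact_mod_cast hNsqZ
  have hN0 : (N : ℂ) ≠ 0 := by
    rcases hN with h | h <;> rw [h] <;> push_cast <;>
      simp [pow_ne_zero, Nat.cast_ne_zero, (Fact.out : p.Prime).ne_zero]
  have hNdvd : (p : ℤ) ∣ N := by
    rcases hN with h | h <;> rw [h]
    · exact dvd_pow_self _ (by omega)
    · exact Dvd.dvd.neg_right (dvd_pow_self _ (by omega))
  have hNp : (p : ℤ) * (N / p) = N := Int.mul_ediv_cancel' hNdvd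
  -- sum of R
  have hsumRZ : ∑ a : ZMod p, R a = N + 1 := by
    have hpt : ∀ a : ZMod p, R a = N / p + (if a = 0 then 1 else 0) := by
      intro a; rw [hR a]; by_cases h : a = 0 <;> simp [h]
    rw [Finset.sum_congr rfl (fun (a : ZMod p) _ => hpt a), Finset.sum_add_distrib,
      Finset.sum_const, Finset.card_univ, ZMod.card,
      Finset.sum_ite_eq' Finset.univ (0 : ZMod p) (fun _ => (1 : ℤ))]
    simp only [Finset.mem_univ, if_pos, nsmul_eq_mul]
    rw [hNp]
  have hsumR : ∑ a : ZMod p, (R a : ℂ) = (N : ℂ) + 1 := by exact_mod_cast hsumRZ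
  -- R as N/p + indicator
  have hRC : ∀ a : ZMod p, (R a : ℂ) = ((N / p : ℤ) : ℂ) + (if a = 0 then 1 else 0) := by
    intro a
    rw [hR a]
    by_cases h : a = 0 <;> simp [h]
  -- evenness of fstar
  have hweven : ∀ x, walsh f (-x) = walsh f x := by
    intro x
    unfold walsh
    refine Fintype.sum_equiv (Equiv.neg _) _ _ (fun y => ?_)
    show zeta p ^ (f y - ip (-x) y).val = zeta p ^ (f (-y) - ip x (-y)).val
    congr 2
    rw [heven, ip_neg_right, ip_neg_left]
  have hstar_even : ∀ x, fstar (-x) = fstar x := by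
    intro x
    have h1 := hdual (-x)
    rw [hweven x, hdual x] at h1
    have h2 := mul_right_cancel₀ hN0 h1
    exact chi_inj (show chi p (fstar (-x)) = chi p (fstar x) from h2.symm)
  -- quadratic values
  have quad : ∀ (a : ZMod p) (x : Fin (2*m) → ZMod p), x ≠ 0 →
      lam f a x = (N : ℂ) - R a ∨ lam f a x = -(R a : ℂ) := by
    intro a x hx
    have hq := lam_sq heven a (hGall a) x
    rw [if_neg hx, mul_zero, add_zero] at hq
    have hkC2 : ((K a : ℕ) : ℂ) = ((N : ℂ) - 1) * R a := by exact_mod_cast hK a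
    have hlC2 : ((L a : ℕ) : ℂ) = (N : ℂ) + (R a : ℂ) ^ 2 - 3 * R a := by exact_mod_cast hL a
    have hmuC2 : ((MU a : ℕ) : ℂ) = (R a : ℂ) ^ 2 - R a := by exact_mod_cast hMU a
    have hfac : (lam f a x - ((N : ℂ) - R a)) * (lam f a x + R a) = 0 := by
      rw [hkC2, hlC2, hmuC2] at hq
      linear_combination hq
    rcases mul_eq_zero.1 hfac with h | h
    · exact Or.inl (sub_eq_zero.1 h)
    · exact Or.inr (eq_neg_of_add_eq_zero_left h)
  -- key identification
  have key : ∀ (x : Fin (2*m) → ZMod p), x ≠ 0 → ∀ a : ZMod p,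
      lam f a x = (N : ℂ) * (if fstar x = a then 1 else 0) - (R a : ℂ) := by
    intro x hx
    have heps01 : ∀ a : ZMod p, lam f a x
        = (N : ℂ) * (if lam f a x = (N : ℂ) - R a then 1 else 0) - R a := by
      intro a
      rcases quad a x hx with h | h
      · rw [if_pos h, mul_one]; linear_combination h
      · have hne : lam f a x ≠ (N : ℂ) - R a := by
          rw [h]; intro hc; exact hN0 (by linear_combination -hc)
        rw [if_neg hne, mul_zero]; linear_combination h
    have hsumlam : ∑ a : ZMod p, lam f a x = -1 := by
      unfold lam
      rw [Finset.sum_comm]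
      have hptw : ∀ w : Fin (2*m) → ZMod p,
          ∑ a : ZMod p, indc f a w * chi p (ip x w)
            = chi p (ip x w) - (if w = 0 then chi p (ip x w) else 0) := by
        intro w
        rw [← Finset.sum_mul]
        have hindsum : (∑ a : ZMod p, indc f a w) = if w = 0 then 0 else 1 := by
          by_cases hw : w = 0
          · simp [indc, hw]
          · rw [if_neg hw, Finset.sum_eq_single (f w)]
            · simp [indc, hw]
            · intro b _ hb
              exact if_neg (fun hc => hb hc.1.symm)
            · simp
        rw [hindsum]
        by_cases hw : w = 0 <;> simp [hw]
      rw [Finset.sum_congr rfl (fun w _ => hptw w), Finset.sum_sub_distrib]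
      rw [sum_chi_ip x, if_neg hx]
      rw [Finset.sum_ite_eq' Finset.univ (0 : Fin (2*m) → ZMod p)
        (fun w => chi p (ip x w))]
      simp [ip_zero_right, chi_zero]
    set S : Finset (ZMod p) := Finset.univ.filter
      (fun a => lam f a x = (N : ℂ) - R a) with hS
    have hcardS : (S.card : ℂ) = 1 := by
      have h1 : ∑ a : ZMod p,
          ((N : ℂ) * (if lam f a x = (N : ℂ) - R a then 1 else 0) - R a) = -1 := by
        rw [← Finset.sum_congr rfl (fun (a : ZMod p) _ => heps01 a)]
        exact hsumlam
      rw [Finset.sum_sub_distrib, hsumR] at h1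
      have h2 : ∑ a : ZMod p, (N : ℂ) * (if lam f a x = (N : ℂ) - R a then 1 else 0)
          = (N : ℂ) * S.card := by
        rw [← Finset.mul_sum]
        congr 1
        rw [hS, Finset.sum_boole]
      rw [h2] at h1
      have h3 : (N : ℂ) * S.card = (N : ℂ) * 1 := by linear_combination h1
      exact mul_left_cancel₀ hN0 h3
    have hcard1 : S.card = 1 := by exact_mod_cast hcardS
    obtain ⟨a0, ha0⟩ := Finset.card_eq_one.1 hcard1
    have hmemS : ∀ a : ZMod p, (lam f a x = (N : ℂ) - R a) ↔ a = a0 := by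
      intro a
      constructor
      · intro h
        have hmem : a ∈ S := Finset.mem_filter.2 ⟨Finset.mem_univ a, h⟩
        rw [ha0] at hmem
        exact Finset.mem_singleton.1 hmem
      · rintro rfl
        have hmem : a ∈ S := ha0 ▸ Finset.mem_singleton_self a
        exact (Finset.mem_filter.1 hmem).2
    have hwalsh : walsh f x = (N : ℂ) * chi p a0 := by
      have e1 : walsh f x = ∑ y, chi p (f y) * chi p (ip (-x) y) := by
        show (∑ y, zeta p ^ ((f y - ip x y).val)) = _
        refine Finset.sum_congr rfl (fun y _ => ?_)
        rw [show zeta p ^ ((f y - ip x y).val) = chi p (f y - ip x y) from rfl, ← chi_add]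
        congr 1
        rw [ip_neg_left]
        ring
      have e2 : ∀ y, chi p (f y) * chi p (ip (-x) y)
          = ∑ a : ZMod p, ((if f y = a then (1:ℂ) else 0) * (chi p a * chi p (ip (-x) y))) := by
        intro y
        rw [Finset.sum_congr rfl
          (fun (a : ZMod p) _ => by rw [ite_mul, one_mul, zero_mul])]
        rw [Finset.sum_ite_eq Finset.univ (f y)
          (fun a => chi p a * chi p (ip (-x) y))]
        simp
      have e3 : ∀ (a : ZMod p) (y : Fin (2*m) → ZMod p), (if f y = a then (1:ℂ) else 0)
          = indc f a y + (if y = 0 ∧ a = 0 then 1 else 0) := by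
        intro a y
        by_cases hy : y = 0
        · subst hy
          have h1 : indc f a 0 = 0 := by simp [indc]
          rw [h1, h0]
          by_cases ha : a = 0
          · subst ha; simp
          · simp [ha, Ne.symm ha]
        · have h1 : indc f a y = if f y = a then 1 else 0 := by simp [indc, hy]
          rw [h1]
          by_cases hfy : f y = a <;> simp [hfy, hy]
      have e4 : walsh f x = ∑ a : ZMod p, chi p a *
          (lam f a x + (if a = 0 then 1 else 0)) := by
        rw [e1, Finset.sum_congr rfl (fun y _ => e2 y), Finset.sum_comm]
        refine Finset.sum_congr rfl (fun a _ => ?_)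
        rw [Finset.sum_congr rfl (fun y _ => by rw [e3 a y, add_mul]),
          Finset.sum_add_distrib]
        have i1 : ∑ y, indc f a y * (chi p a * chi p (ip (-x) y))
            = chi p a * lam f a x := by
          rw [← lam_even heven a x]
          unfold lam
          rw [Finset.mul_sum]
          exact Finset.sum_congr rfl (fun y _ => by ring)
        have i2 : ∑ y : Fin (2*m) → ZMod p,
            (if y = 0 ∧ a = 0 then (1:ℂ) else 0) * (chi p a * chi p (ip (-x) y))
            = chi p a * (if a = 0 then 1 else 0) := by
          by_cases ha : a = 0
          · subst ha
            simp only [and_true, if_pos rfl]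
            rw [Finset.sum_congr rfl (fun y _ => by rw [ite_mul, zero_mul]),
              Finset.sum_ite_eq' Finset.univ (0 : Fin (2*m) → ZMod p)]
            simp [ip_zero_right, chi_zero]
          · simp [ha]
        rw [i1, i2]
        ring
      rw [e4]
      have e5 : ∀ a : ZMod p, chi p a * (lam f a x + (if a = 0 then 1 else 0))
          = (N : ℂ) * ((if a = a0 then 1 else 0) * chi p a)
            - (((N / p : ℤ) : ℂ)) * chi p a := by
        intro a
        have hla := heps01 a
        rw [show (if lam f a x = (N : ℂ) - R a then (1:ℂ) else 0)
            = (if a = a0 then 1 else 0) from by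
          rw [if_congr (hmemS a) rfl rfl]] at hla
        rw [hla, hRC a]
        split_ifs <;> ring
      have s1 : ∑ a : ZMod p, (N : ℂ) * ((if a = a0 then 1 else 0) * chi p a)
          = (N : ℂ) * chi p a0 := by
        rw [← Finset.mul_sum]
        congr 1
        rw [Finset.sum_congr rfl
          (fun (a : ZMod p) _ => by rw [ite_mul, one_mul, zero_mul]),
          Finset.sum_ite_eq' Finset.univ a0 (fun a => chi p a)]
        simp
      have s2 : ∑ a : ZMod p, (((N / p : ℤ) : ℂ)) * chi p a = 0 := by
        rw [← Finset.mul_sum, sum_chi, mul_zero]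
      rw [Finset.sum_congr rfl (fun a _ => e5 a), Finset.sum_sub_distrib, s1, s2,
        sub_zero]
    have ha0fstar : a0 = fstar x := by
      have h1 := (hdual x).symm.trans hwalsh
      have h2 : chi p (fstar x) = chi p a0 := by
        have h3 : chi p (fstar x) * (N : ℂ) = chi p a0 * (N : ℂ) := by
          show zeta p ^ (fstar x).val * (N : ℂ) = chi p a0 * (N : ℂ)
          rw [h1]; ring
        exact mul_right_cancel₀ hN0 h3
      exact (chi_inj h2).symm
    intro a
    rw [heps01 a, if_congr ((hmemS a).trans (by rw [ha0fstar, eq_comm])) rfl rfl]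
  -- dual eigenvalues
  have hlamstar : ∀ (a : ZMod p) (x : Fin (2*m) → ZMod p),
      lam fstar a x = if x = 0 then ((N : ℂ) - 1) * R a
        else (N : ℂ) * (if f x = a then 1 else 0) - R a := by
    intro a x
    have hkCa : ((K a : ℕ) : ℂ) = ((N : ℂ) - 1) * R a := by exact_mod_cast hK a
    have hlam0 : lam f a (0 : Fin (2*m) → ZMod p) = ((K a : ℕ) : ℂ) := by
      have h1 := degree_eq heven a (0 : Fin (2*m) → ZMod p)
      have h2 := (hGall a).regular 0
      have h3 : lam f a (0 : Fin (2*m) → ZMod p) = ∑ z, indc f a z := by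
        unfold lam
        refine Finset.sum_congr rfl (fun w _ => ?_)
        rw [ip_zero_left, chi_zero, mul_one]
      rw [h3, ← h1]
      exact_mod_cast h2
    have hptw : ∀ w : Fin (2*m) → ZMod p, (N : ℂ) * indc fstar a w
        = lam f a w + R a - (if w = 0 then lam f a 0 + R a else 0) := by
      intro w
      by_cases hw : w = 0
      · subst hw
        rw [if_pos rfl, show indc fstar a (0 : Fin (2*m) → ZMod p) = 0 by simp [indc],
          mul_zero]
        ring
      · rw [if_neg hw, show indc fstar a w = if fstar w = a then 1 else 0 by
          simp [indc, hw], key w hw a]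
        by_cases h : fstar w = a <;> simp [h] <;> ring
    have hX : (N : ℂ) * lam fstar a x
        = ∑ w, ((N : ℂ) * indc fstar a w) * chi p (ip x w) := by
      unfold lam
      rw [Finset.mul_sum]
      exact Finset.sum_congr rfl (fun w _ => by ring)
    rw [Finset.sum_congr rfl (fun w _ => by rw [hptw w])] at hX
    have hsplit : ∑ w, (lam f a w + (R a : ℂ)
          - (if w = 0 then lam f a 0 + (R a : ℂ) else 0)) * chi p (ip x w)
        = (∑ w, lam f a w * chi p (ip x w))
          + (R a : ℂ) * (if x = 0 then ((p : ℂ) ^ (2*m)) else 0)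
          - (lam f a 0 + R a) := by
      simp only [sub_mul, add_mul, Finset.sum_sub_distrib, Finset.sum_add_distrib,
        ite_mul, zero_mul]
      rw [Finset.sum_ite_eq' Finset.univ (0 : Fin (2*m) → ZMod p)
        (fun w => lam f a 0 * chi p (ip x w) + (R a : ℂ) * chi p (ip x w)),
        ← Finset.mul_sum, sum_chi_ip x]
      simp only [Finset.mem_univ, if_pos, ip_zero_right, chi_zero, mul_one]
    rw [hsplit, double_sum heven a x, hlam0, hkCa] at hX
    by_cases hx : x = 0
    · rw [if_pos hx]
      subst hx
      rw [show indc f a (0 : Fin (2*m) → ZMod p) = 0 by simp [indc], if_pos rfl,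
        mul_zero] at hX
      have h5 : (N : ℂ) * lam fstar a 0 = (N : ℂ) * (((N : ℂ) - 1) * R a) := by
        linear_combination hX - (R a : ℂ) * hNsq
      exact mul_left_cancel₀ hN0 h5
    · rw [if_neg hx]
      rw [if_neg hx, mul_zero, show indc f a x = if f x = a then 1 else 0 by
        simp [indc, hx]] at hX
      have h5 : (N : ℂ) * lam fstar a x
          = (N : ℂ) * ((N : ℂ) * (if f x = a then 1 else 0) - R a) := by
        linear_combination hX - (if f x = a then (1:ℂ) else 0) * hNsq
      exact mul_left_cancel₀ hN0 h5
  intro i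
  refine ⟨K i, L i, MU i, hK i, hL i, hMU i, ?_⟩
  have hkC : ((K i : ℕ) : ℂ) = ((N : ℂ) - 1) * R i := by exact_mod_cast hK i
  have hlC : ((L i : ℕ) : ℂ) = (N : ℂ) + (R i : ℂ) ^ 2 - 3 * R i := by exact_mod_cast hL i
  have hmuC : ((MU i : ℕ) : ℂ) = (R i : ℂ) ^ 2 - R i := by exact_mod_cast hMU i
  have hcnv_star : ∀ w, cnv fstar i w
      = (if w = 0 then (K i : ℂ) - MU i else 0) + ((L i : ℂ) - MU i) * indc fstar i w
        + MU i := by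
    have hzero : ∀ w, (fun w => cnv fstar i w
        - ((if w = 0 then (K i : ℂ) - MU i else 0)
          + ((L i : ℂ) - MU i) * indc fstar i w + MU i)) w = 0 := by
      apply fourier_inv
      intro x
      have e0 : ∀ w : Fin (2*m) → ZMod p, (cnv fstar i w
          - ((if w = 0 then (K i : ℂ) - MU i else 0)
            + ((L i : ℂ) - MU i) * indc fstar i w + MU i)) * chi p (ip x w)
          = cnv fstar i w * chi p (ip x w)
            - ((if w = 0 then (K i : ℂ) - MU i else 0)
              + ((L i : ℂ) - MU i) * indc fstar i w + MU i) * chi p (ip x w) := by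
        intro w; ring
      rw [Finset.sum_congr rfl (fun w _ => e0 w), Finset.sum_sub_distrib,
        fourier_cnv i x, lam_even hstar_even i x,
        sum_formula i x ((K i : ℂ) - MU i) ((L i : ℂ) - MU i) (MU i),
        hlamstar i x, hkC, hlC, hmuC]
      by_cases hx : x = 0
      · rw [if_pos hx, if_pos hx]
        linear_combination ((R i : ℂ) ^ 2 - R i) * hNsq
      · rw [if_neg hx, if_neg hx, mul_zero]
        by_cases hfx : f x = i
        · rw [if_pos hfx]
          ring
        · rw [if_neg hfx]
          ring
    intro w
    exact sub_eq_zero.1 (hzero w)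
  exact srg_of_cnv hstar_even i (K i) (L i) (MU i) hcnv_star
end

section
/- Let f : GF(p)^n → GF(p) be even with f(0)=0, whose level-set relations form a symmetric association scheme with intersection numbers ρ^k_{ij}. If b ∈ D_i (1 ≤ i ≤ p) and 1 ≤ j ≤ p-1, then the number of x ∈ GF(p)^n with f(x+b) - f(x) = j equals (Σ_{k=0}^{p} ρ^i_{(j+k mod p), k}) + ρ^i_{p, p-j}. -/
open Finset BigOperators

/-- The class index (in `{0, 1, …, p}`) of a point `z ∈ GF(p)^n` with respect to the
level-set partition of an even function `f` with `f 0 = 0`:  class `0` is `{0}`,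
class `j` (for `1 ≤ j ≤ p-1`) is `D_j = f⁻¹(j)`, and class `p` is `D_p = f⁻¹(0) \ {0}`. -/
def classOf {p n : ℕ} (f : (Fin n → ZMod p) → ZMod p) (z : Fin n → ZMod p) : ℕ :=
  if z = 0 then 0 else if f z = 0 then p else (f z).val

section aux
variable {p n : ℕ} [NeZero p] (f : (Fin n → ZMod p) → ZMod p)

lemma classOf_lt (w : Fin n → ZMod p) : classOf f w < p + 1 := by
  unfold classOf
  split_ifs
  · omega
  · omega
  · exact Nat.lt_succ_of_lt (ZMod.val_lt _)

lemma classOf_eq_cast (h0 : f 0 = 0) (w : Fin n → ZMod p) (k : ℕ) (hk : classOf f w = k) :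
    f w = (k : ZMod p) := by
  unfold classOf at hk
  split_ifs at hk with h1 h2
  · subst hk; simp [h1, h0]
  · subst hk; simp [h2]
  · subst hk; simp [ZMod.natCast_val, ZMod.cast_id]

lemma classOf_eq_pos_iff (h0 : f 0 = 0) (w : Fin n → ZMod p) (m : ℕ) (hm : 1 ≤ m) (hmp : m < p) :
    classOf f w = m ↔ f w = (m : ZMod p) := by
  have hcast : ((m : ZMod p)).val = m := ZMod.val_natCast_of_lt hmp
  have hne : (m : ZMod p) ≠ 0 := by
    intro h; rw [h, ZMod.val_zero] at hcast; omega
  unfold classOf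
  split_ifs with h1 h2
  · subst h1; rw [h0]
    exact ⟨fun h => by omega, fun h => absurd h.symm hne⟩
  · rw [h2]
    exact ⟨fun h => by omega, fun h => absurd h.symm hne⟩
  · constructor
    · intro h
      rw [← h, ZMod.natCast_val, ZMod.cast_id]
    · intro h
      rw [h, hcast]

lemma f_eq_zero_iff (h0 : f 0 = 0) (w : Fin n → ZMod p) :
    f w = 0 ↔ (classOf f w = 0 ∨ classOf f w = p) := by
  unfold classOf
  split_ifs with h1 h2
  · simp [h1, h0]
  · simp [h2]
  · simp only [h1, iff_false] at *
    constructor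
    · intro h; exact absurd h h2
    · rintro (h | h)
      · exact absurd ((ZMod.val_eq_zero _).mp h) h2
      · exact absurd h (Nat.ne_of_lt (ZMod.val_lt _))

end aux

/-- Let `f : GF(p)^n → GF(p)` be even with `f 0 = 0`, whose level-set
relations `R_k = {(x,y) : x - y ∈ D_k}` form a symmetric association scheme with
intersection numbers `ρ^k_{ij}` (`ρ i j k` below).  If `b ∈ D_i` (`1 ≤ i ≤ p`) and
`1 ≤ j ≤ p-1`, then the number of `x` with `f(x+b) - f(x) = j` equals
`(∑_{k=0}^{p} ρ^i_{(j+k mod p), k}) + ρ^i_{p, p-j}`. -/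
theorem stmt18 (p n : ℕ) [Fact p.Prime] (hodd : p ≠ 2)
    (f : (Fin n → ZMod p) → ZMod p)
    (heven : ∀ x, f (-x) = f x) (h0 : f 0 = 0)
    (ρ : ℕ → ℕ → ℕ → ℕ)
    (hscheme : ∀ i j k : ℕ, i ≤ p → j ≤ p → k ≤ p →
      ∀ x y : Fin n → ZMod p, classOf f (x - y) = k →
        (Finset.univ.filter
          (fun z => classOf f (x - z) = i ∧ classOf f (z - y) = j)).card = ρ i j k) :
    ∀ (b : Fin n → ZMod p) (i j : ℕ), 1 ≤ i → i ≤ p → 1 ≤ j → j ≤ p - 1 →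
      classOf f b = i →
      (Finset.univ.filter (fun x => f (x + b) - f x = (j : ZMod p))).card =
        (∑ k ∈ Finset.range (p + 1), ρ ((j + k) % p) k i) + ρ p (p - j) i := by
  intro b i j hi1 hip hj1 hjp hb
  classical
  have hp1 : 1 < p := (Fact.out : p.Prime).one_lt
  have hjlt : j < p := by omega
  -- step 1 : re-index x ↦ -x
  have step1 : (Finset.univ.filter (fun x => f (x + b) - f x = (j : ZMod p))).card
      = (Finset.univ.filter (fun z => f (b - z) - f z = (j : ZMod p))).card := by
    refine Finset.card_bij' (fun x _ => -x) (fun z _ => -z) ?_ ?_ ?_ ?_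
    · intro x hx
      simp only [mem_filter, mem_univ, true_and, sub_neg_eq_add] at hx ⊢
      rw [heven, add_comm b x]
      exact hx
    · intro z hz
      simp only [mem_filter, mem_univ, true_and] at hz ⊢
      rw [heven, neg_add_eq_sub]
      exact hz
    · intro x _; simp
    · intro z _; simp
  rw [step1]
  -- specialize the scheme at the pair (b, 0)
  have hby : classOf f (b - 0) = i := by simpa using hb
  have hρ : ∀ i' j', i' ≤ p → j' ≤ p →
      (Finset.univ.filter (fun z => classOf f (b - z) = i' ∧ classOf f z = j')).card
        = ρ i' j' i := by
    intro i' j' h1 h2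
    have := hscheme i' j' i h1 h2 hip b 0 hby
    simpa using this
  -- step 2 : fiberwise count over the class of z
  have hmaps : ∀ z ∈ Finset.univ.filter (fun z => f (b - z) - f z = (j : ZMod p)),
      classOf f z ∈ Finset.range (p + 1) := fun z _ => mem_range.mpr (classOf_lt f z)
  rw [Finset.card_eq_sum_card_fiberwise hmaps]
  -- step 3 : compute each fiber
  have key : ∀ k ∈ Finset.range (p + 1),
      ((Finset.univ.filter (fun z => f (b - z) - f z = (j : ZMod p))).filter
        (fun z => classOf f z = k)).card
      = ρ ((j + k) % p) k i + (if k = p - j then ρ p (p - j) i else 0) := by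
    intro k hk
    rw [Finset.mem_range] at hk
    rw [Finset.filter_filter]
    have hmod : (j + k) % p = if j + k < p then j + k else j + k - p := by
      rcases lt_or_ge (j + k) p with h | h
      · rw [Nat.mod_eq_of_lt h, if_pos h]
      · rw [Nat.mod_eq_sub_mod h, Nat.mod_eq_of_lt (by omega), if_neg (by omega)]
    -- for any z in the fiber, f z = k
    have hcond : ∀ z : Fin n → ZMod p, classOf f z = k →
        (f (b - z) - f z = (j : ZMod p) ↔ f (b - z) = ((j + k : ℕ) : ZMod p)) := by
      intro z hz
      rw [classOf_eq_cast f h0 z k hz, sub_eq_iff_eq_add, Nat.cast_add]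
    by_cases hkj : k = p - j
    · -- the special fiber k = p - j
      subst hkj
      have hm0 : (j + (p - j)) % p = 0 := by
        have h : j + (p - j) = p := by omega
        rw [h, Nat.mod_self]
      rw [hm0, if_pos rfl]
      have hcast0 : ((j + (p - j) : ℕ) : ZMod p) = 0 := by
        have h : j + (p - j) = p := by omega
        rw [h, ZMod.natCast_self]
      have hsplit : (Finset.univ.filter
            (fun z => f (b - z) - f z = (j : ZMod p) ∧ classOf f z = p - j))
          = (Finset.univ.filter
              (fun z => classOf f (b - z) = 0 ∧ classOf f z = p - j)) ∪
            (Finset.univ.filter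
              (fun z => classOf f (b - z) = p ∧ classOf f z = p - j)) := by
        rw [← Finset.filter_or]
        apply Finset.filter_congr
        intro z _
        constructor
        · rintro ⟨h1, h2⟩
          rcases (f_eq_zero_iff f h0 (b - z)).mp
              (by rw [← hcast0]; exact (hcond z h2).mp h1) with h | h
          · exact Or.inl ⟨h, h2⟩
          · exact Or.inr ⟨h, h2⟩
        · rintro (⟨h1, h2⟩ | ⟨h1, h2⟩) <;>
          · refine ⟨(hcond z h2).mpr ?_, h2⟩
            rw [hcast0]
            exact (f_eq_zero_iff f h0 (b - z)).mpr (by tauto)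
      have hdisj : Disjoint
          (Finset.univ.filter (fun z => classOf f (b - z) = 0 ∧ classOf f z = p - j))
          (Finset.univ.filter (fun z => classOf f (b - z) = p ∧ classOf f z = p - j)) := by
        rw [Finset.disjoint_left]
        intro z hz1 hz2
        simp only [mem_filter, mem_univ, true_and] at hz1 hz2
        omega
      rw [hsplit, Finset.card_union_of_disjoint hdisj,
        hρ 0 (p - j) (Nat.zero_le p) (by omega), hρ p (p - j) le_rfl (by omega)]
    · -- generic fiber
      have hm1 : 1 ≤ (j + k) % p := by rw [hmod]; split_ifs <;> omega
      have hm2 : (j + k) % p < p := Nat.mod_lt _ (by omega)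
      have hcastm : (((j + k) % p : ℕ) : ZMod p) = ((j + k : ℕ) : ZMod p) :=
        ZMod.natCast_mod _ _
      have hset : (Finset.univ.filter
            (fun z => f (b - z) - f z = (j : ZMod p) ∧ classOf f z = k))
          = (Finset.univ.filter
            (fun z => classOf f (b - z) = (j + k) % p ∧ classOf f z = k)) := by
        apply Finset.filter_congr
        intro z _
        constructor
        · rintro ⟨h1, h2⟩
          refine ⟨?_, h2⟩
          rw [classOf_eq_pos_iff f h0 (b - z) _ hm1 hm2, hcastm]
          exact (hcond z h2).mp h1
        · rintro ⟨h1, h2⟩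
          refine ⟨(hcond z h2).mpr ?_, h2⟩
          rw [classOf_eq_pos_iff f h0 (b - z) _ hm1 hm2, hcastm] at h1
          exact h1
      rw [if_neg hkj, Nat.add_zero, hset, hρ ((j + k) % p) k hm2.le (by omega)]
  rw [Finset.sum_congr rfl key, Finset.sum_add_distrib,
    Finset.sum_ite_eq' (Finset.range (p + 1)) (p - j) (fun _ => ρ p (p - j) i),
    if_pos (Finset.mem_range.mpr (by omega))]
end
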